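/- arXiv:0911.5368 — 2 statements merged into one kernel-verified Lean document; each statement's English description precedes it below -/
import Mathlib

section
/- For every integer a with 0 ≤ a ≤ N+1 and every u ∈ ℂ, T^a(u+a)·[0,1,…,N](u) = [0,1,…,a−1,a+1,…,N+1](u); that is, T^a(u+a) equals the ratio of Casorati determinants [0,1,…,a−1,a+1,…,N+1](u)/[0,1,…,N](u) whenever the denominator is nonzero. -/
/-!
Since `L w_j = 0`, for each `u` the coefficient vector `((-1)^a T^a(u+a))_{0 ≤ a ≤ N+1}` is a
kernel vector of the `(N+1) × (N+2)` Casorati matrix `(w_j(u+2a))`. Any kernel vector `c` of an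
`m × (m+1)` matrix satisfies `(-1)^b D_b c_a = (-1)^a D_a c_b`, where `D_a` is the maximal minor
omitting column `a`; with `b = N+1` this is
`T^a(u+a) [0,…,N](u) = T^{N+1}(u+N+1) [0,…,â,…,N+1](u)`.
Finally `T^{N+1}(u+N+1) = x_{N+1}(u) x_N(u+2) ⋯ x_1(u+2N)`, and this product telescopes to
`Y_0 = 1`.
-/

open Complex

noncomputable def oneSubXD (x w : ℂ → ℂ) : ℂ → ℂ := fun u => w u - x u * w (u + 2)

noncomputable def Lop (x : ℕ → ℂ → ℂ) : ℕ → (ℂ → ℂ) → (ℂ → ℂ)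
  | 0 => fun w => w
  | k + 1 => fun w => oneSubXD (x (k + 1)) (Lop x k w)

noncomputable def casorati (N : ℕ) (w : ℕ → ℂ → ℂ) (idx : ℕ → ℕ) (u : ℂ) : ℂ :=
  Matrix.det (Matrix.of fun j k : Fin (N + 1) => w (j.1 + 1) (u + 2 * (idx k.1 : ℂ)))

open Matrix in
theorem Matrix.det_submatrix_succAbove_mul_eq_of_mulVec_eq_zero {R : Type*} [CommRing R] {m : ℕ}
    (B : Matrix (Fin m) (Fin (m + 1)) R) {c : Fin (m + 1) → R} (hc : B *ᵥ c = 0)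
    (a b : Fin (m + 1)) :
    (-1) ^ (b : ℕ) * det (B.submatrix id b.succAbove) * c a
      = (-1) ^ (a : ℕ) * det (B.submatrix id a.succAbove) * c b := by
  -- Border `B` by the row `e_b`: then `A c = c_b e_0`, and Cramer's rule reads off `c_a`.
  set A : Matrix (Fin (m + 1)) (Fin (m + 1)) R :=
    of fun i j => Fin.cases (if j = b then 1 else 0) (fun i => B i j) i
  have hAc : A *ᵥ c = Pi.single 0 (c b) := by
    ext i
    refine Fin.cases ?_ (fun i => ?_) i
    · simp [A, mulVec, dotProduct]
    · simpa [A, mulVec] using congrFun hc i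
  have hminor (j : Fin (m + 1)) :
      A.submatrix Fin.succ j.succAbove = B.submatrix id j.succAbove := by
    ext; simp [A]
  have hdet : det A = (-1) ^ (b : ℕ) * det (B.submatrix id b.succAbove) := by
    rw [det_succ_row_zero, Fintype.sum_eq_single b (fun j hj => by simp [A, hj])]
    simp [A, hminor]
  have hcramer : det A * c a = adjugate A a 0 * c b := by
    have := congrFun (congrArg (adjugate A *ᵥ ·) hAc) a
    simp only [mulVec_mulVec, adjugate_mul, smul_mulVec, one_mulVec, mulVec_single] at this
    simpa using this
  rw [← hdet, hcramer, adjugate_fin_succ_eq_det_submatrix, Fin.succAbove_zero, hminor]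
  simp

/-- The leading coefficient `x m u * x (m - 1) (u + 2) * ⋯ * x 1 (u + 2 (m - 1))` of `Lop x m`. -/
noncomputable def Lop.leadingCoeff (x : ℕ → ℂ → ℂ) : ℕ → ℂ → ℂ
  | 0, _ => 1
  | m + 1, u => x (m + 1) u * Lop.leadingCoeff x m (u + 2)

lemma add_two_add_two_mul (u : ℂ) (j : ℕ) :
    u + 2 + 2 * (j : ℂ) = u + 2 * ((j + 1 : ℕ) : ℂ) := by
  push_cast; ring

theorem Lop.apply_eq_zero (x : ℕ → ℂ → ℂ) :
    ∀ (m : ℕ) (w : ℂ → ℂ) (u : ℂ), (∀ j ≤ m, w (u + 2 * j) = 0) → Lop x m w u = 0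
  | 0, w, u, h => by simpa [Lop] using h 0 le_rfl
  | m + 1, w, u, h => by
    have h0 := Lop.apply_eq_zero x m w u fun j hj => h j (by omega)
    have h2 := Lop.apply_eq_zero x m w (u + 2) fun j hj => by
      rw [add_two_add_two_mul]; exact h (j + 1) (by omega)
    simp [Lop, oneSubXD, h0, h2]

theorem Lop.apply_eq_leadingCoeff_mul (x : ℕ → ℂ → ℂ) :
    ∀ (m : ℕ) (w : ℂ → ℂ) (u : ℂ), (∀ j < m, w (u + 2 * j) = 0) →
      Lop x m w u = (-1) ^ m * Lop.leadingCoeff x m u * w (u + 2 * m)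
  | 0, w, u, _ => by simp [Lop, Lop.leadingCoeff]
  | m + 1, w, u, h => by
    have h0 := Lop.apply_eq_zero x m w u fun j hj => h j (by omega)
    have h2 := Lop.apply_eq_leadingCoeff_mul x m w (u + 2) fun j hj => by
      rw [add_two_add_two_mul]; exact h (j + 1) (by omega)
    simp only [Lop, oneSubXD, Lop.leadingCoeff, h0, h2, add_two_add_two_mul]
    ring

theorem Lop.coeff_top_eq_leadingCoeff (x : ℕ → ℂ → ℂ) (T : ℤ → ℂ → ℂ) (m : ℕ)
    (hTL : ∀ w : ℂ → ℂ, ∀ u : ℂ, Lop x m w u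
      = ∑ a ∈ Finset.range (m + 1), (-1) ^ a * T a (u + a) * w (u + 2 * a)) (u : ℂ) :
    T m (u + m) = Lop.leadingCoeff x m u := by
  set δ : ℂ → ℂ := fun z => if z = u + 2 * m then 1 else 0
  have hδ : ∀ j < m, δ (u + 2 * j) = 0 := fun j hj => by
    simp only [δ, add_right_inj, mul_eq_mul_left_iff, Nat.cast_inj, two_ne_zero, or_false,
      ite_eq_right_iff]
    omega
  have h := Lop.apply_eq_leadingCoeff_mul x m δ u hδ
  rw [hTL, Finset.sum_range_succ, Finset.sum_eq_zero fun j hj => by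
    rw [hδ j (Finset.mem_range.1 hj), mul_zero]] at h
  simpa [δ] using h

section Telescoping

variable {n : ℕ} {s : ℂ} {Y x : ℕ → ℂ → ℂ}

theorem leadingCoeff_eq_Y_of_le (hY0 : ∀ v, Y 0 v = 1) (hYne : ∀ b ≤ n, ∀ v, Y b v ≠ 0)
    (hxa : ∀ a, 1 ≤ a → a ≤ n - 1 → ∀ u : ℂ,
      x a u = Y a (u + a) / Y (a - 1) (u + a + 1)) :
    ∀ m ≤ n - 1, ∀ v, Lop.leadingCoeff x m v = Y m (v + m)
  | 0, _, v => by simp [Lop.leadingCoeff, hY0]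
  | m + 1, hm, v => by
    have e : v + 2 + (m : ℂ) = v + ((m + 1 : ℕ) : ℂ) + 1 := by push_cast; ring
    rw [Lop.leadingCoeff, hxa (m + 1) (by omega) hm, Nat.add_sub_cancel,
      leadingCoeff_eq_Y_of_le hY0 hYne hxa m (by omega), e,
      div_mul_cancel₀ _ (hYne m (by omega) _)]

theorem leadingCoeff_eq_Y_mul_Y (hn : 1 ≤ n) (hY0 : ∀ v, Y 0 v = 1)
    (hYne : ∀ b ≤ n, ∀ v, Y b v ≠ 0)
    (hxa : ∀ a, 1 ≤ a → a ≤ n - 1 → ∀ u : ℂ,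
      x a u = Y a (u + a) / Y (a - 1) (u + a + 1))
    (hxn : ∀ u : ℂ, x n u = Y n (u + n) * Y n (u + n + s) / Y (n - 1) (u + n + 1)) (v : ℂ) :
    Lop.leadingCoeff x n v = Y n (v + n) * Y n (v + n + s) := by
  obtain ⟨p, rfl⟩ : ∃ p, n = p + 1 := ⟨n - 1, by omega⟩
  have e : v + 2 + (p : ℂ) = v + ((p + 1 : ℕ) : ℂ) + 1 := by push_cast; ring
  rw [Lop.leadingCoeff, hxn, leadingCoeff_eq_Y_of_le hY0 hYne hxa p (by omega),
    Nat.add_sub_cancel, e, div_mul_cancel₀ _ (hYne p (by omega) _)]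

theorem leadingCoeff_add_eq_Y (hn : 1 ≤ n) (hY0 : ∀ v, Y 0 v = 1)
    (hYne : ∀ b ≤ n, ∀ v, Y b v ≠ 0)
    (hxa : ∀ a, 1 ≤ a → a ≤ n - 1 → ∀ u : ℂ,
      x a u = Y a (u + a) / Y (a - 1) (u + a + 1))
    (hxn : ∀ u : ℂ, x n u = Y n (u + n) * Y n (u + n + s) / Y (n - 1) (u + n + 1))
    (hxnbar : ∀ u : ℂ, x (n + 1) u
      = Y (n - 1) (u + n + 1 + s) / (Y n (u + n + 2) * Y n (u + n + 2 + s)))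
    (hxbar : ∀ a, 1 ≤ a → a ≤ n - 1 → ∀ u : ℂ,
      x (2 * n - a + 1) u = Y (a - 1) (u + 2 * (n : ℂ) - a + 1 + s)
        / Y a (u + 2 * (n : ℂ) - a + 2 + s)) :
    ∀ m ≤ n - 1, ∀ v, Lop.leadingCoeff x (n + 1 + m) v = Y (n - 1 - m) (v + n + 1 + m + s)
  | 0, _, v => by
    have e : v + 2 + (n : ℂ) = v + n + 2 := by ring
    rw [Lop.leadingCoeff, hxnbar, leadingCoeff_eq_Y_mul_Y hn hY0 hYne hxa hxn, e,
      div_mul_cancel₀ _ (mul_ne_zero (hYne n le_rfl _) (hYne n le_rfl _))]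
    simp
  | m + 1, hm, v => by
    have hx := hxbar (n - 1 - m) (by omega) (by omega) v
    rw [show 2 * n - (n - 1 - m) + 1 = n + 1 + m + 1 by omega,
      show n - 1 - m - 1 = n - 1 - (m + 1) by omega] at hx
    have hcast : ((n - 1 - m : ℕ) : ℂ) = n - 1 - m := by
      rw [Nat.cast_sub (by omega), Nat.cast_sub (by omega)]; simp
    have e : v + 2 * (n : ℂ) - ((n - 1 - m : ℕ) : ℂ) + 2 + s = v + 2 + n + 1 + m + s := by
      rw [hcast]; ring
    rw [show n + 1 + (m + 1) = n + 1 + m + 1 by omega, Lop.leadingCoeff, hx,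
      leadingCoeff_add_eq_Y hn hY0 hYne hxa hxn hxnbar hxbar m (by omega), e,
      div_mul_cancel₀ _ (hYne _ (by omega) _), hcast]
    congr 1
    push_cast
    ring

theorem leadingCoeff_two_mul_eq_one (hn : 1 ≤ n) (hY0 : ∀ v, Y 0 v = 1)
    (hYne : ∀ b ≤ n, ∀ v, Y b v ≠ 0)
    (hxa : ∀ a, 1 ≤ a → a ≤ n - 1 → ∀ u : ℂ,
      x a u = Y a (u + a) / Y (a - 1) (u + a + 1))
    (hxn : ∀ u : ℂ, x n u = Y n (u + n) * Y n (u + n + s) / Y (n - 1) (u + n + 1))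
    (hxnbar : ∀ u : ℂ, x (n + 1) u
      = Y (n - 1) (u + n + 1 + s) / (Y n (u + n + 2) * Y n (u + n + 2 + s)))
    (hxbar : ∀ a, 1 ≤ a → a ≤ n - 1 → ∀ u : ℂ,
      x (2 * n - a + 1) u = Y (a - 1) (u + 2 * (n : ℂ) - a + 1 + s)
        / Y a (u + 2 * (n : ℂ) - a + 2 + s)) (v : ℂ) :
    Lop.leadingCoeff x (2 * n) v = 1 := by
  have h := leadingCoeff_add_eq_Y hn hY0 hYne hxa hxn hxnbar hxbar (n - 1) le_rfl v
  rwa [show n + 1 + (n - 1) = 2 * n by omega, Nat.sub_self, hY0] at h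

end Telescoping

theorem casorati_eq_det_submatrix_succAbove (N : ℕ) (w : ℕ → ℂ → ℂ) (u : ℂ)
    (a : Fin (N + 2)) :
    casorati N w (fun k => if k < a then k else k + 1) u
      = ((Matrix.of fun (j : Fin (N + 1)) (k : Fin (N + 2)) => w (j + 1) (u + 2 * (k : ℂ))
          ).submatrix id a.succAbove).det := by
  unfold casorati
  congr 1
  ext j k
  simp only [Matrix.of_apply, Matrix.submatrix_apply, id, Fin.succAbove, Fin.lt_def,
    Fin.val_castSucc]
  split_ifs <;> simp

open Matrix in
theorem casorati_mul_eq_of_sum_eq_zero (N : ℕ) (w : ℕ → ℂ → ℂ) (t : ℕ → ℂ) (u : ℂ)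
    (ht : ∀ b, 1 ≤ b → b ≤ N + 1 →
      ∑ k ∈ Finset.range (N + 2), (-1) ^ k * t k * w b (u + 2 * k) = 0)
    (a : ℕ) (ha : a ≤ N + 1) :
    t a * casorati N w (fun k => k) u
      = t (N + 1) * casorati N w (fun k => if k < a then k else k + 1) u := by
  set B : Matrix (Fin (N + 1)) (Fin (N + 2)) ℂ := of fun j k => w (j + 1) (u + 2 * (k : ℂ))
  have hB : B *ᵥ (fun k => (-1) ^ (k : ℕ) * t k) = 0 := by
    ext j
    simp only [mulVec, dotProduct, B, of_apply, Pi.zero_apply]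
    rw [← ht (j + 1) (by omega) (by omega), ← Fin.sum_univ_eq_sum_range]
    exact Finset.sum_congr rfl fun k _ => by ring
  have h := det_submatrix_succAbove_mul_eq_of_mulVec_eq_zero B hB ⟨a, by omega⟩ (Fin.last (N + 1))
  have hlast : casorati N w (fun k => k) u
      = casorati N w (fun k => if k < Fin.last (N + 1) then k else k + 1) u := by
    unfold casorati
    congr 1
    ext j k
    simp [k.is_le]
  rw [← casorati_eq_det_submatrix_succAbove, ← casorati_eq_det_submatrix_succAbove, ← hlast] at h
  have hsign : (-1 : ℂ) ^ a * (-1) ^ (N + 1) ≠ 0 := by simp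
  refine mul_left_cancel₀ hsign ?_
  simp only [Fin.val_last] at h
  linear_combination h

theorem cramer_A2_odd_general
    (n : ℕ) (hn : 2 ≤ n) (N : ℕ) (hN : N = 2 * n - 1)
    (s : ℂ)
    (Q : ℕ → ℂ → ℂ) (hQ0 : ∀ u, Q 0 u = 1)
    (hQne : ∀ a, 1 ≤ a → a ≤ n → ∀ u, Q a u ≠ 0)
    (Y : ℕ → ℂ → ℂ) (hY : ∀ a u, Y a u = Q a (u - 1) / Q a (u + 1))
    (x : ℕ → ℂ → ℂ)
    (hxa : ∀ a, 1 ≤ a → a ≤ n - 1 → ∀ u : ℂ,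
      x a u = Y a (u + a) / Y (a - 1) (u + a + 1))
    (hxn : ∀ u : ℂ, x n u = Y n (u + n) * Y n (u + n + s) / Y (n - 1) (u + n + 1))
    (hxnbar : ∀ u : ℂ, x (n + 1) u
      = Y (n - 1) (u + n + 1 + s) / (Y n (u + n + 2) * Y n (u + n + 2 + s)))
    (hxbar : ∀ a, 1 ≤ a → a ≤ n - 1 → ∀ u : ℂ,
      x (2 * n - a + 1) u = Y (a - 1) (u + 2 * (n : ℂ) - a + 1 + s)
        / Y a (u + 2 * (n : ℂ) - a + 2 + s))
    (T : ℤ → ℂ → ℂ)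
    (hTL : ∀ w : ℂ → ℂ, ∀ u : ℂ, Lop x (N + 1) w u
      = ∑ a ∈ Finset.range (N + 2), (-1) ^ a * T a (u + a) * w (u + 2 * a))
    (w : ℕ → ℂ → ℂ)
    (hw : ∀ b, 1 ≤ b → b ≤ N + 1 → ∀ u : ℂ, Lop x (N + 1) (w b) u = 0)
    :
    ∀ a : ℕ, a ≤ N + 1 → ∀ u : ℂ,
      T (a : ℤ) (u + a) * casorati N w (fun k => k) u
        = casorati N w (fun k => if k < a then k else k + 1) u := by
  have hY0 : ∀ v, Y 0 v = 1 := fun v => by rw [hY, hQ0, hQ0, div_one]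
  have hYne : ∀ b ≤ n, ∀ v, Y b v ≠ 0 := fun b hb v => by
    rcases Nat.eq_zero_or_pos b with rfl | hb0
    · simp [hY0]
    · rw [hY]; exact div_ne_zero (hQne b hb0 hb _) (hQne b hb0 hb _)
  have htop : ∀ v, T (N + 1 : ℕ) (v + (N + 1 : ℕ)) = 1 := fun v => by
    rw [Lop.coeff_top_eq_leadingCoeff x T (N + 1) hTL, show N + 1 = 2 * n by omega,
      leadingCoeff_two_mul_eq_one (by omega) hY0 hYne hxa hxn hxnbar hxbar]
  intro a ha u
  have h := casorati_mul_eq_of_sum_eq_zero N w (fun k => T k (u + k)) u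
    (fun b hb1 hbN => by rw [← hTL, hw b hb1 hbN]) a ha
  rwa [htop, one_mul] at h

theorem cramer_A2_odd
    (n : ℕ) (hn : 2 ≤ n) (N : ℕ) (hN : N = 2 * n - 1)
    (hbar : ℂ) (hbar_ne : hbar ≠ 0) (s : ℂ)
    (hs : s = (Real.pi : ℂ) * Complex.I / (2 * hbar))
    (Q : ℕ → ℂ → ℂ) (hQ0 : ∀ u, Q 0 u = 1)
    (hQne : ∀ a, 1 ≤ a → a ≤ n → ∀ u, Q a u ≠ 0)
    (hconst : ℕ → ℂ)
    (hQper : ∀ a, 1 ≤ a → a ≤ n → hconst a ≠ 0 ∧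
      ∀ u, Q a (u + (Real.pi : ℂ) * Complex.I / hbar) = hconst a * Q a u)
    (Y : ℕ → ℂ → ℂ) (hY : ∀ a u, Y a u = Q a (u - 1) / Q a (u + 1))
    (x : ℕ → ℂ → ℂ)
    (hxa : ∀ a, 1 ≤ a → a ≤ n - 1 → ∀ u : ℂ,
      x a u = Y a (u + a) / Y (a - 1) (u + a + 1))
    (hxn : ∀ u : ℂ, x n u = Y n (u + n) * Y n (u + n + s) / Y (n - 1) (u + n + 1))
    (hxnbar : ∀ u : ℂ, x (n + 1) u
      = Y (n - 1) (u + n + 1 + s) / (Y n (u + n + 2) * Y n (u + n + 2 + s)))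
    (hxbar : ∀ a, 1 ≤ a → a ≤ n - 1 → ∀ u : ℂ,
      x (2 * n - a + 1) u = Y (a - 1) (u + 2 * (n : ℂ) - a + 1 + s)
        / Y a (u + 2 * (n : ℂ) - a + 2 + s))
    (T : ℤ → ℂ → ℂ)
    (hTneg : ∀ a : ℤ, a < 0 → ∀ u, T a u = 0)
    (hTbig : ∀ a : ℤ, (N : ℤ) + 1 < a → ∀ u, T a u = 0)
    (hTL : ∀ w : ℂ → ℂ, ∀ u : ℂ, Lop x (N + 1) w u
      = ∑ a ∈ Finset.range (N + 2), (-1) ^ a * T a (u + a) * w (u + 2 * a))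
    (w : ℕ → ℂ → ℂ)
    (hw : ∀ b, 1 ≤ b → b ≤ N + 1 → ∀ u : ℂ, Lop x (N + 1) (w b) u = 0)
    (hxi : ∀ u : ℂ, casorati N w (fun k => k) u ≠ 0)
    :
    ∀ a : ℕ, a ≤ N + 1 → ∀ u : ℂ,
      T (a : ℤ) (u + a) * casorati N w (fun k => k) u
        = casorati N w (fun k => if k < a then k else k + 1) u :=
  cramer_A2_odd_general n hn N hN s Q hQ0 hQne Y hY x hxa hxn hxnbar hxbar T hTL w hw
end

section
/- The top coefficient of the difference operator L is identically 1: for every u ∈ ℂ, T^{N+1}(u) = 1; equivalently, the telescoping product identity x_{N+1}(u) · x_N(u+2) · x_{N−1}(u+4) ⋯ x_1(u+2N) = 1 holds for all u ∈ ℂ. -/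
/-!
Put `h b = Y_b(u+2n+1+b+s)` and `g i = Y_{n-i}(u+3n+2+i)`. In the product
`x_{N+1}(u) x_N(u+2) ⋯ x_1(u+2N)` the `n` factors `z_ā` telescope to `h 0 / h n`, the factor `z_0`
is `h n / g 0`, and the `n` factors `z_a` telescope to `g 0 / g n`; so the product is
`h 0 / g n = 1` as `Y_0 ≡ 1`. Applying `L` to the indicator function of `u + 2(N+1)` kills every
term of its expansion except the top one, so `T^{N+1}(u + N + 1)` equals this product.
-/

open Complex

open Finset

theorem Finset.prod_range_div_of_ne_zero {K : Type*} [CommGroupWithZero K] (f : ℕ → K) :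
    ∀ n, (∀ i ≤ n, f i ≠ 0) → ∏ i ∈ range n, f i / f (i + 1) = f 0 / f n
  | 0, hf => by simp [div_self (hf 0 le_rfl)]
  | n + 1, hf => by
    rw [prod_range_succ, prod_range_div_of_ne_zero f n fun i hi => hf i (by omega),
      div_mul_div_cancel₀ (hf n (by omega))]

theorem Lop_apply_eq_prod_of_eq_zero (x : ℕ → ℂ → ℂ) (w : ℂ → ℂ) :
    ∀ (k : ℕ) (u : ℂ), (∀ j < k, w (u + 2 * j) = 0) →
      Lop x k w u = (-1) ^ k * (∏ j ∈ range k, x (k - j) (u + 2 * j)) * w (u + 2 * k)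
  | 0, u, _ => by simp [Lop]
  | k + 1, u, hw => by
    have hshift : ∀ j : ℕ, u + 2 + 2 * (j : ℂ) = u + 2 * ((j + 1 : ℕ) : ℂ) := by
      intro j; push_cast; ring
    have hu : Lop x k w u = 0 := by
      rw [Lop_apply_eq_prod_of_eq_zero x w k u fun j hj => hw j (by omega), hw k (by omega),
        mul_zero]
    have hu2 := Lop_apply_eq_prod_of_eq_zero x w k (u + 2) fun j hj => by
      rw [hshift]; exact hw (j + 1) (by omega)
    have hprod : ∏ j ∈ range (k + 1), x (k + 1 - j) (u + 2 * j)
        = x (k + 1) u * ∏ j ∈ range k, x (k - j) (u + 2 + 2 * j) := by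
      rw [prod_range_succ', mul_comm]
      congr 1
      · simp
      · refine prod_congr rfl fun j _ => ?_
        rw [hshift, Nat.add_sub_add_right]
    show Lop x k w u - x (k + 1) u * Lop x k w (u + 2) = _
    rw [hu, hu2, hprod, hshift]
    ring

theorem Lop_top_coeff_eq_prod (x : ℕ → ℂ → ℂ) (k : ℕ) (T : ℤ → ℂ → ℂ)
    (hTL : ∀ w : ℂ → ℂ, ∀ u : ℂ,
      Lop x k w u = ∑ a ∈ range (k + 1), (-1) ^ a * T a (u + a) * w (u + 2 * a))
    (u : ℂ) : T k (u + k) = ∏ j ∈ range k, x (k - j) (u + 2 * j) := by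
  set δ : ℂ → ℂ := fun z => if z = u + 2 * k then 1 else 0
  have hδ : ∀ j : ℕ, δ (u + 2 * j) = if j = k then 1 else 0 := by
    intro j
    simp [δ]
  have h := hTL δ u
  rw [Lop_apply_eq_prod_of_eq_zero x δ k u fun j hj => by simp [hδ, hj.ne],
    sum_eq_single_of_mem k (self_mem_range_succ k) fun j _ hj => by simp [hδ, hj]] at h
  simpa [hδ] using h.symm

theorem Finset.prod_range_two_mul_add_one {M : Type*} [CommMonoid M] (f : ℕ → M) (n : ℕ) :
    ∏ k ∈ range (2 * n + 1), f k = (∏ k ∈ range n, f k) * f n * ∏ i ∈ range n, f (n + 1 + i) := by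
  rw [show 2 * n + 1 = n + 1 + n by ring, prod_range_add, prod_range_succ]

section ProductIdentity

variable {n : ℕ} {s : ℂ} {Y x : ℕ → ℂ → ℂ}

theorem prod_range_xbar (hYne : ∀ a ≤ n, ∀ v, Y a v ≠ 0)
    (hxbar : ∀ a, 1 ≤ a → a ≤ n → ∀ u : ℂ,
      x (2 * n - a + 2) u = Y (a - 1) (u + 2 * (n : ℂ) - a + 2 + s)
        / Y a (u + 2 * (n : ℂ) - a + 3 + s)) (u : ℂ) :
    ∏ k ∈ range n, x (2 * n + 1 - k) (u + 2 * k)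
      = Y 0 (u + 2 * n + 1 + s) / Y n (u + 2 * n + 1 + n + s) := by
  let h : ℕ → ℂ := fun b => Y b (u + 2 * n + 1 + b + s)
  calc ∏ k ∈ range n, x (2 * n + 1 - k) (u + 2 * k) = ∏ k ∈ range n, h k / h (k + 1) := by
        refine prod_congr rfl fun k hk => ?_
        have hk : k < n := mem_range.mp hk
        rw [show 2 * n + 1 - k = 2 * n - (k + 1) + 2 by omega, hxbar (k + 1) (by omega) hk]
        simp only [h, Nat.add_sub_cancel]
        push_cast
        ring_nf
    _ = Y 0 (u + 2 * n + 1 + s) / Y n (u + 2 * n + 1 + n + s) := by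
        rw [prod_range_div_of_ne_zero h n fun b hb => hYne b hb _]
        simp [h]

theorem prod_range_x (hYne : ∀ a ≤ n, ∀ v, Y a v ≠ 0)
    (hxa : ∀ a, 1 ≤ a → a ≤ n → ∀ u : ℂ,
      x a u = Y a (u + a) / Y (a - 1) (u + a + 1)) (u : ℂ) :
    ∏ i ∈ range n, x (2 * n + 1 - (n + 1 + i)) (u + 2 * (n + 1 + i : ℕ))
      = Y n (u + 3 * n + 2) / Y 0 (u + 3 * n + 2 + n) := by
  let g : ℕ → ℂ := fun i => Y (n - i) (u + 3 * n + 2 + i)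
  calc ∏ i ∈ range n, x (2 * n + 1 - (n + 1 + i)) (u + 2 * (n + 1 + i : ℕ))
        = ∏ i ∈ range n, g i / g (i + 1) := by
        refine prod_congr rfl fun i hi => ?_
        have hi : i < n := mem_range.mp hi
        rw [show 2 * n + 1 - (n + 1 + i) = n - i by omega, hxa (n - i) (by omega) (by omega)]
        simp only [g, Nat.sub_sub]
        push_cast [Nat.cast_sub hi.le]
        ring_nf
    _ = Y n (u + 3 * n + 2) / Y 0 (u + 3 * n + 2 + n) := by
        rw [prod_range_div_of_ne_zero g n fun i _ => hYne _ (Nat.sub_le n i) _]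
        simp [g]

theorem prod_range_x_eq_one (hY0 : ∀ v, Y 0 v = 1) (hYne : ∀ a ≤ n, ∀ v, Y a v ≠ 0)
    (hxa : ∀ a, 1 ≤ a → a ≤ n → ∀ u : ℂ,
      x a u = Y a (u + a) / Y (a - 1) (u + a + 1))
    (hx0 : ∀ u : ℂ, x (n + 1) u = Y n (u + n + 1 + s) / Y n (u + n + 2))
    (hxbar : ∀ a, 1 ≤ a → a ≤ n → ∀ u : ℂ,
      x (2 * n - a + 2) u = Y (a - 1) (u + 2 * (n : ℂ) - a + 2 + s)
        / Y a (u + 2 * (n : ℂ) - a + 3 + s)) (u : ℂ) :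
    ∏ k ∈ range (2 * n + 1), x (2 * n + 1 - k) (u + 2 * k) = 1 := by
  rw [prod_range_two_mul_add_one, prod_range_xbar hYne hxbar, prod_range_x hYne hxa,
    show 2 * n + 1 - n = n + 1 by omega, hx0, hY0, hY0]
  have hA := hYne n le_rfl (u + 2 * n + 1 + n + s)
  have hB := hYne n le_rfl (u + 2 * n + n + 2)
  field_simp
  ring_nf

end ProductIdentity

theorem top_coefficient_A2_even_general
    (n : ℕ) (N : ℕ) (hN : N = 2 * n)
    (s : ℂ)
    (Q : ℕ → ℂ → ℂ) (hQ0 : ∀ u, Q 0 u = 1)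
    (hQne : ∀ a, 1 ≤ a → a ≤ n → ∀ u, Q a u ≠ 0)
    (Y : ℕ → ℂ → ℂ) (hY : ∀ a u, Y a u = Q a (u - 1) / Q a (u + 1))
    (x : ℕ → ℂ → ℂ)
    (hxa : ∀ a, 1 ≤ a → a ≤ n → ∀ u : ℂ,
      x a u = Y a (u + a) / Y (a - 1) (u + a + 1))
    (hx0 : ∀ u : ℂ, x (n + 1) u = Y n (u + n + 1 + s) / Y n (u + n + 2))
    (hxbar : ∀ a, 1 ≤ a → a ≤ n → ∀ u : ℂ,
      x (2 * n - a + 2) u = Y (a - 1) (u + 2 * (n : ℂ) - a + 2 + s)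
        / Y a (u + 2 * (n : ℂ) - a + 3 + s))
    (T : ℤ → ℂ → ℂ)
    (hTL : ∀ w : ℂ → ℂ, ∀ u : ℂ, Lop x (N + 1) w u
      = ∑ a ∈ Finset.range (N + 2), (-1) ^ a * T a (u + a) * w (u + 2 * a))
    :
    (∀ u : ℂ, T ((N : ℤ) + 1) u = 1) ∧
    (∀ u : ℂ, ∏ k ∈ Finset.range (N + 1), x (N + 1 - k) (u + 2 * k) = 1) := by
  subst hN
  have hY0 : ∀ v, Y 0 v = 1 := fun v => by rw [hY, hQ0, hQ0, div_one]
  have hYne : ∀ a ≤ n, ∀ v, Y a v ≠ 0 := by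
    intro a ha v
    rcases Nat.eq_zero_or_pos a with rfl | ha0
    · exact hY0 v ▸ one_ne_zero
    · rw [hY]; exact div_ne_zero (hQne a ha0 ha _) (hQne a ha0 ha _)
  have hprod := prod_range_x_eq_one hY0 hYne hxa hx0 hxbar
  refine ⟨fun v => ?_, hprod⟩
  have htop := Lop_top_coeff_eq_prod x (2 * n + 1) T hTL (v - (2 * n + 1 : ℕ))
  rw [hprod, sub_add_cancel] at htop
  exact_mod_cast htop

theorem top_coefficient_A2_even
    (n : ℕ) (hn : 1 ≤ n) (N : ℕ) (hN : N = 2 * n)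
    (hbar : ℂ) (hbar_ne : hbar ≠ 0) (s : ℂ)
    (hs : s = (Real.pi : ℂ) * Complex.I / (2 * hbar))
    (Q : ℕ → ℂ → ℂ) (hQ0 : ∀ u, Q 0 u = 1)
    (hQne : ∀ a, 1 ≤ a → a ≤ n → ∀ u, Q a u ≠ 0)
    (hconst : ℕ → ℂ)
    (hQper : ∀ a, 1 ≤ a → a ≤ n → hconst a ≠ 0 ∧
      ∀ u, Q a (u + (Real.pi : ℂ) * Complex.I / hbar) = hconst a * Q a u)
    (Y : ℕ → ℂ → ℂ) (hY : ∀ a u, Y a u = Q a (u - 1) / Q a (u + 1))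
    (x : ℕ → ℂ → ℂ)
    (hxa : ∀ a, 1 ≤ a → a ≤ n → ∀ u : ℂ,
      x a u = Y a (u + a) / Y (a - 1) (u + a + 1))
    (hx0 : ∀ u : ℂ, x (n + 1) u = Y n (u + n + 1 + s) / Y n (u + n + 2))
    (hxbar : ∀ a, 1 ≤ a → a ≤ n → ∀ u : ℂ,
      x (2 * n - a + 2) u = Y (a - 1) (u + 2 * (n : ℂ) - a + 2 + s)
        / Y a (u + 2 * (n : ℂ) - a + 3 + s))
    (T : ℤ → ℂ → ℂ)
    (hTneg : ∀ a : ℤ, a < 0 → ∀ u, T a u = 0)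
    (hTbig : ∀ a : ℤ, (N : ℤ) + 1 < a → ∀ u, T a u = 0)
    (hTL : ∀ w : ℂ → ℂ, ∀ u : ℂ, Lop x (N + 1) w u
      = ∑ a ∈ Finset.range (N + 2), (-1) ^ a * T a (u + a) * w (u + 2 * a))
    :
    (∀ u : ℂ, T ((N : ℤ) + 1) u = 1) ∧
    (∀ u : ℂ, ∏ k ∈ Finset.range (N + 1), x (N + 1 - k) (u + 2 * k) = 1) :=
  top_coefficient_A2_even_general n N hN s Q hQ0 hQne Y hY x hxa hx0 hxbar T hTL
end
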